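/- arXiv:1208.4479 — 6 statements merged into one kernel-verified Lean document; each statement's English description precedes it below -/
import Mathlib

section
/- Let Y be a real Banach space and let D ⊆ Y be an open star-shaped set. If, for some δ > 0, the set (ck D)^{−δ} is nonempty, then the shrunken set D^{−δ} is star-shaped. -/
/-- The convex kernel of a set `S`: the set of points of `S` with respect to which `S`
is star-shaped. -/
def convexKernel {Y : Type*} [NormedAddCommGroup Y] [NormedSpace ℝ Y] (S : Set Y) : Set Y :=
  {x ∈ S | StarConvex ℝ x S}

/-- The `δ`-shrinking `S^{-δ} = {x ∈ S : dist(x, ∂S) > δ}` of a set `S`. -/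
def shrink {Y : Type*} [NormedAddCommGroup Y] [NormedSpace ℝ Y] (S : Set Y) (δ : ℝ) : Set Y :=
  {x ∈ S | δ < Metric.infDist x (frontier S)}


/-!
Let `x` lie deeper than `δ` in `ck D`, and let `y ∈ D^{-δ}`. For some `r > δ` the balls
`B(x, r)` and `B(y, r)` lie in `ck D` and in `D` respectively, so for every `w` with `‖w‖ < r`
the point `a • x + b • y + w = a • (x + w) + b • (y + w)` lies in `D` by star-convexity of `D`
with respect to `x + w`. Thus `B(a • x + b • y, r) ⊆ D`, which puts `a • x + b • y` in `D^{-δ}`.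
-/

open Metric Set

theorem IsPreconnected.subset_of_disjoint_frontier {X : Type*} [TopologicalSpace X]
    {s t : Set X} (ht : IsPreconnected t) (hts : (t ∩ s).Nonempty)
    (hdisj : Disjoint t (frontier s)) : t ⊆ s := by
  have hcover : t ⊆ interior s ∪ (closure s)ᶜ := fun p hp => by
    by_cases hps : p ∈ closure s
    · exact Or.inl (by_contra fun hpi => hdisj.ne_of_mem hp ⟨hps, hpi⟩ rfl)
    · exact Or.inr hps
  have hmeet : (t ∩ interior s).Nonempty := by
    obtain ⟨p, hpt, hps⟩ := hts
    exact ⟨p, hpt, (hcover hpt).resolve_right (not_not.2 (subset_closure hps))⟩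
  exact (ht.subset_left_of_subset_union isOpen_interior isClosed_closure.isOpen_compl
    (disjoint_compl_right_iff_subset.2 interior_subset_closure) hcover hmeet).trans
    interior_subset

theorem le_infDist_frontier_of_ball_subset {Y : Type*} [PseudoMetricSpace Y] {S : Set Y}
    {z : Y} {r : ℝ} (hS : (frontier S).Nonempty) (h : ball z r ⊆ S) :
    r ≤ infDist z (frontier S) := by
  refine (le_infDist hS).2 fun p hp => not_lt.1 fun hpz => hp.2 ?_
  exact interior_maximal h isOpen_ball (mem_ball.2 (by rwa [dist_comm]))

section NormedSpace

variable {Y : Type*} [NormedAddCommGroup Y] [NormedSpace ℝ Y]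

theorem ball_infDist_frontier_subset {S : Set Y} {x : Y} (hx : x ∈ S) :
    ball x (infDist x (frontier S)) ⊆ S := by
  rcases (ball x (infDist x (frontier S))).eq_empty_or_nonempty with hempty | hne
  · exact hempty ▸ empty_subset S
  · exact (convex_ball _ _).isPreconnected.subset_of_disjoint_frontier
      ⟨x, mem_ball_self (pos_of_mem_ball hne.some_mem), hx⟩ disjoint_ball_infDist

theorem mem_shrink_of_ball_subset {S : Set Y} {z : Y} {r δ : ℝ} (hS : (frontier S).Nonempty)
    (hz : z ∈ S) (hδr : δ < r) (h : ball z r ⊆ S) : z ∈ shrink S δ :=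
  ⟨hz, hδr.trans_le (le_infDist_frontier_of_ball_subset hS h)⟩

theorem nonempty_frontier_of_mem_shrink {S : Set Y} {z : Y} {δ : ℝ} (hδ : 0 ≤ δ)
    (hz : z ∈ shrink S δ) : (frontier S).Nonempty := by
  refine nonempty_iff_ne_empty.2 fun h => ?_
  have := hz.2
  rw [h, infDist_empty] at this
  exact this.not_ge hδ

theorem convexKernel_subset (S : Set Y) : convexKernel S ⊆ S := fun _ hx => hx.1

theorem convexKernel_univ : convexKernel (univ : Set Y) = univ :=
  eq_univ_of_forall fun x => ⟨mem_univ x, starConvex_univ x⟩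

theorem ball_smul_add_smul_subset {S : Set Y} {x y : Y} {r a b : ℝ}
    (hx : ball x r ⊆ convexKernel S) (hy : ball y r ⊆ S)
    (ha : 0 ≤ a) (hb : 0 ≤ b) (hab : a + b = 1) : ball (a • x + b • y) r ⊆ S := by
  intro p hp
  set w := p - (a • x + b • y)
  have hw : ‖w‖ < r := by rwa [mem_ball, dist_eq_norm] at hp
  have hxw : x + w ∈ convexKernel S := hx (by simpa [mem_ball, dist_eq_norm] using hw)
  have hyw : y + w ∈ S := hy (by simpa [mem_ball, dist_eq_norm] using hw)
  have hp_eq : a • (x + w) + b • (y + w) = p := by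
    rw [smul_add, smul_add, add_add_add_comm, ← add_smul, hab, one_smul]
    exact add_sub_cancel _ _
  exact hp_eq ▸ hxw.2 hyw ha hb hab

end NormedSpace

theorem stmt0_general {Y : Type*} [NormedAddCommGroup Y] [NormedSpace ℝ Y]
    (D : Set Y)
    (δ : ℝ) (hδ : 0 < δ) (hne : (shrink (convexKernel D) δ).Nonempty) :
    ∃ x ∈ shrink D δ, StarConvex ℝ x (shrink D δ) := by
  obtain ⟨x, hx⟩ := hne
  have hxK : x ∈ convexKernel D := hx.1
  have hfrK := nonempty_frontier_of_mem_shrink hδ.le hx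
  have hfrD : (frontier D).Nonempty := nonempty_frontier_iff.2
    ⟨⟨x, hxK.1⟩, fun hD => by simp [hD, convexKernel_univ] at hfrK⟩
  have hballx : ball x (infDist x (frontier (convexKernel D))) ⊆ convexKernel D :=
    ball_infDist_frontier_subset hxK
  refine ⟨x, mem_shrink_of_ball_subset hfrD hxK.1 hx.2
    (hballx.trans (convexKernel_subset D)), fun y hy a b ha hb hab => ?_⟩
  have hr := lt_min hx.2 hy.2
  refine mem_shrink_of_ball_subset hfrD (hxK.2 hy.1 ha hb hab) hr
    (ball_smul_add_smul_subset ?_ ?_ ha hb hab)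
  · exact (ball_subset_ball (min_le_left _ _)).trans hballx
  · exact (ball_subset_ball (min_le_right _ _)).trans (ball_infDist_frontier_subset hy.1)

/-- If `D` is an open star-shaped subset of a real Banach space and `(ck D)^{-δ}` is
nonempty, then `D^{-δ}` is star-shaped. -/
theorem stmt0 {Y : Type*} [NormedAddCommGroup Y] [NormedSpace ℝ Y] [CompleteSpace Y]
    (D : Set Y) (hD : IsOpen D) (hstar : (convexKernel D).Nonempty)
    (δ : ℝ) (hδ : 0 < δ) (hne : (shrink (convexKernel D) δ).Nonempty) :
    ∃ x ∈ shrink D δ, StarConvex ℝ x (shrink D δ) :=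
  stmt0_general D δ hδ hne
end

section
/- Let X be a normed vector space, let M, r, η > 0 be real numbers, let p, n be integers with 1 ≤ p < n, set h₀ = r/(2·e·η·M), and let h > 0 satisfy n ≤ h₀/h. Suppose vectors v_{p+1}, …, v_n ∈ X satisfy ‖v_j‖ ≤ (ln 2)·η·M·(2ηMj/r)^{j−1} for j = p+1, …, n. Then ‖Σ_{j=p}^{n−1} h^j · v_{j+1}‖ ≤ (ln 2)·η·M·(2ηMh/r)^p · e^{p+1} · p!. In particular, ‖Σ_{j=p}^{n−1} h^j v_{j+1}‖ ≤ c(η,p) · r^{−p} · M^{p+1} · h^p with c(η,p) = (ln 2)·η·(2η)^p·e^{p+1}·p!. -/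
/-!
Put `c = 2ηMh/r` and `L = (ln 2)ηM`. The step-size condition reads `c·n ≤ e⁻¹`, so the `j`-th
term is at most `L (c(j+1))^j ≤ L c^p e^{p+1} (j+1)^p e^{-(j+1)}`: the factors beyond the `p`-th
power each contribute at most `e⁻¹`. Since `x^p e^{-x}` decreases on `[p, ∞)`, the sum of
`(j+1)^p e^{-(j+1)}` over `j ≥ p` is bounded by `∫₀^∞ x^p e^{-x} dx = p!`.
-/

open Real Finset
open scoped Nat

lemma antitoneOn_pow_mul_exp_neg (p : ℕ) :
    AntitoneOn (fun x : ℝ => x ^ p * rexp (-x)) (Set.Ici (p : ℝ)) := by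
  intro x hx y _ hxy
  rcases p.eq_zero_or_pos with rfl | hp
  · simpa using hxy
  have hp' : (0 : ℝ) < p := by exact_mod_cast hp
  have hx' : (p : ℝ) ≤ x := hx
  -- `1 + t ≤ exp t` at `t = (y - x) / p`, together with `p ≤ x`
  have hy_le : y ≤ x * rexp ((y - x) / p) := by
    have h1 : (y - x) / p + 1 ≤ rexp ((y - x) / p) := add_one_le_exp _
    have h2 : y - x ≤ x * ((y - x) / p) := by
      rw [mul_div_assoc', le_div_iff₀ hp']
      nlinarith
    nlinarith
  have hpow : y ^ p ≤ x ^ p * rexp (y - x) := by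
    calc y ^ p ≤ (x * rexp ((y - x) / p)) ^ p := by gcongr; linarith
      _ = x ^ p * rexp (y - x) := by
        rw [mul_pow, ← exp_nat_mul, mul_div_cancel₀ _ hp'.ne']
  calc y ^ p * rexp (-y) ≤ x ^ p * rexp (y - x) * rexp (-y) := by gcongr
    _ = x ^ p * rexp (-x) := by rw [mul_assoc, ← exp_add]; ring_nf

lemma sum_Ico_pow_mul_exp_neg_le_factorial (p n : ℕ) :
    ∑ i ∈ Ico p n, ((i + 1 : ℕ) : ℝ) ^ p * rexp (-((i + 1 : ℕ) : ℝ)) ≤ p ! := by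
  rcases lt_or_ge n p with hnp | hpn
  · rw [Ico_eq_empty_of_le hnp.le, sum_empty]; positivity
  calc ∑ i ∈ Ico p n, ((i + 1 : ℕ) : ℝ) ^ p * rexp (-((i + 1 : ℕ) : ℝ))
      ≤ ∫ x in (p : ℝ)..n, x ^ p * rexp (-x) :=
        ((antitoneOn_pow_mul_exp_neg p).mono Set.Icc_subset_Ici_self).sum_le_integral_Ico hpn
    _ ≤ ∫ x in (0 : ℝ)..n, x ^ p * rexp (-x) := by
        refine intervalIntegral.integral_mono_interval (Nat.cast_nonneg p) (by exact_mod_cast hpn)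
          le_rfl ?_ (Continuous.intervalIntegrable (by fun_prop) _ _)
        filter_upwards [MeasureTheory.ae_restrict_mem measurableSet_Ioc] with x hx
        have : 0 < x := hx.1
        positivity
    _ ≤ p ! := by
        simpa using intervalIntegral_pow_mul_exp_neg_le (k := p) (Nat.cast_nonneg n) one_pos

lemma pow_le_pow_mul_exp_sub {a : ℝ} {p j : ℕ} (ha : 0 ≤ a) (hae : a ≤ rexp (-1))
    (hpj : p ≤ j) : a ^ j ≤ a ^ p * rexp (p - j) := by
  calc a ^ j = a ^ p * a ^ (j - p) := by rw [← pow_add, Nat.add_sub_cancel' hpj]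
    _ ≤ a ^ p * rexp (-1) ^ (j - p) := by gcongr
    _ = a ^ p * rexp (p - j) := by
        rw [← exp_nat_mul, Nat.cast_sub hpj]; ring_nf

theorem stmt5_general {X : Type*} [NormedAddCommGroup X] [NormedSpace ℝ X]
    (M r η : ℝ) (hM : 0 < M) (hr : 0 < r) (hη : 0 < η)
    (p n : ℕ)
    (h : ℝ) (hh : 0 < h) (hn : (n : ℝ) ≤ r / (2 * Real.exp 1 * η * M) / h)
    (v : ℕ → X)
    (hv : ∀ j : ℕ, p + 1 ≤ j → j ≤ n →
      ‖v j‖ ≤ Real.log 2 * η * M * (2 * η * M * (j : ℝ) / r) ^ (j - 1)) :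
    ‖∑ j ∈ Finset.Ico p n, h ^ j • v (j + 1)‖ ≤
        Real.log 2 * η * M * (2 * η * M * h / r) ^ p * Real.exp 1 ^ (p + 1) *
          Nat.factorial p ∧
    ‖∑ j ∈ Finset.Ico p n, h ^ j • v (j + 1)‖ ≤
        (Real.log 2 * η * (2 * η) ^ p * Real.exp 1 ^ (p + 1) * Nat.factorial p) *
          M ^ (p + 1) * h ^ p / r ^ p := by
  set L := Real.log 2 * η * M
  set c := 2 * η * M * h / r
  have hL : 0 ≤ L := by have := Real.log_pos one_lt_two; positivity
  have hc : 0 ≤ c := by positivity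
  have hcn : c * n ≤ rexp (-1) := by
    calc c * n ≤ c * (r / (2 * rexp 1 * η * M) / h) := by gcongr
      _ = rexp (-1) := by simp only [c]; rw [exp_neg]; field_simp
  have hterm : ∀ j ∈ Ico p n, ‖h ^ j • v (j + 1)‖ ≤
      L * c ^ p * rexp 1 ^ (p + 1) * (((j + 1 : ℕ) : ℝ) ^ p * rexp (-((j + 1 : ℕ) : ℝ))) := by
    intro j hj
    obtain ⟨hpj, hjn⟩ := mem_Ico.mp hj
    have hcj : c * (j + 1 : ℕ) ≤ rexp (-1) :=
      le_trans (by gcongr; exact_mod_cast hjn) hcn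
    calc ‖h ^ j • v (j + 1)‖ = h ^ j * ‖v (j + 1)‖ := by
          rw [norm_smul, norm_pow, Real.norm_of_nonneg hh.le]
      _ ≤ h ^ j * (L * (2 * η * M * ((j + 1 : ℕ) : ℝ) / r) ^ j) := by
          gcongr; simpa using hv (j + 1) (by omega) hjn
      _ = L * (c * (j + 1 : ℕ)) ^ j := by
          rw [mul_left_comm, ← mul_pow]; simp only [c]; ring
      _ ≤ L * ((c * (j + 1 : ℕ)) ^ p * rexp (p - j)) := by
          gcongr; exact pow_le_pow_mul_exp_sub (by positivity) hcj hpj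
      _ = L * c ^ p * rexp 1 ^ (p + 1) *
            (((j + 1 : ℕ) : ℝ) ^ p * rexp (-((j + 1 : ℕ) : ℝ))) := by
          have hexp : rexp (p - j) = rexp 1 ^ (p + 1) * rexp (-((j + 1 : ℕ) : ℝ)) := by
            rw [← exp_nat_mul, ← exp_add]; push_cast; ring_nf
          rw [hexp, mul_pow]; ring
  have hbound : ‖∑ j ∈ Ico p n, h ^ j • v (j + 1)‖ ≤ L * c ^ p * rexp 1 ^ (p + 1) * p ! :=
    calc ‖∑ j ∈ Ico p n, h ^ j • v (j + 1)‖ ≤ ∑ j ∈ Ico p n, ‖h ^ j • v (j + 1)‖ :=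
          norm_sum_le _ _
      _ ≤ ∑ j ∈ Ico p n, L * c ^ p * rexp 1 ^ (p + 1) *
            (((j + 1 : ℕ) : ℝ) ^ p * rexp (-((j + 1 : ℕ) : ℝ))) := sum_le_sum hterm
      _ ≤ L * c ^ p * rexp 1 ^ (p + 1) * p ! := by
          rw [← mul_sum]; gcongr; exact sum_Ico_pow_mul_exp_neg_le_factorial p n
  refine ⟨hbound, hbound.trans_eq ?_⟩
  simp only [L, c]
  rw [div_pow]
  field_simp
  ring

/-- Quantitative bound for the tail of the optimally truncated modified vector field:
if `h₀ = r/(2eηM)`, `1 ≤ p < n`, `h > 0` with `n ≤ h₀/h`, and the coefficient vectors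
satisfy `‖v_j‖ ≤ (ln 2)·η·M·(2ηMj/r)^{j−1}` for `p+1 ≤ j ≤ n`, then
`‖Σ_{j=p}^{n−1} h^j v_{j+1}‖ ≤ (ln 2)·η·M·(2ηMh/r)^p·e^{p+1}·p!`, and in particular it
is bounded by `c(η,p)·r^{−p}·M^{p+1}·h^p` with `c(η,p) = (ln 2)·η·(2η)^p·e^{p+1}·p!`. -/
theorem stmt5 {X : Type*} [NormedAddCommGroup X] [NormedSpace ℝ X]
    (M r η : ℝ) (hM : 0 < M) (hr : 0 < r) (hη : 0 < η)
    (p n : ℕ) (hp : 1 ≤ p) (hpn : p < n)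
    (h : ℝ) (hh : 0 < h) (hn : (n : ℝ) ≤ r / (2 * Real.exp 1 * η * M) / h)
    (v : ℕ → X)
    (hv : ∀ j : ℕ, p + 1 ≤ j → j ≤ n →
      ‖v j‖ ≤ Real.log 2 * η * M * (2 * η * M * (j : ℝ) / r) ^ (j - 1)) :
    ‖∑ j ∈ Finset.Ico p n, h ^ j • v (j + 1)‖ ≤
        Real.log 2 * η * M * (2 * η * M * h / r) ^ p * Real.exp 1 ^ (p + 1) *
          Nat.factorial p ∧
    ‖∑ j ∈ Finset.Ico p n, h ^ j • v (j + 1)‖ ≤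
        (Real.log 2 * η * (2 * η) ^ p * Real.exp 1 ^ (p + 1) * Nat.factorial p) *
          M ^ (p + 1) * h ^ p / r ^ p :=
  stmt5_general M r η hM hr hη p n h hh hn v hv
end

section
/- Let Y be a real Hilbert space, D ⊆ Y open and star-shaped with respect to a point U₀ ∈ D, and let G : D → Y be continuously Fréchet differentiable such that for every U ∈ D the derivative DG(U) is a symmetric bounded operator, i.e. ⟨DG(U)W₁, W₂⟩ = ⟨W₁, DG(U)W₂⟩ for all W₁, W₂ ∈ Y. Define V : D → ℝ by V(U) = ∫₀¹ ⟨G(t·U + (1−t)·U₀), U − U₀⟩ dt. Then V is Fréchet differentiable on D with DV(U)·W = ⟨G(U), W⟩ for all U ∈ D and W ∈ Y; that is, G = ∇V, so G is a gradient vector field. -/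
open scoped RealInnerProductSpace

open Metric Set intervalIntegral MeasureTheory

/-! On a ball around the compact segment `[U₀, U] ⊆ D` both `G` and `DG` are bounded, so
`V x = ∫₀¹ ⟪G (t • x + (1 - t) • U₀), x - U₀⟫ dt` may be differentiated under the integral sign.
Writing `γ t = t • U + (1 - t) • U₀`, the derivative at `U` in the direction `W` is
`∫₀¹ (t ⟪U - U₀, DG(γ t) W⟫ + ⟪G (γ t), W⟫) dt`. By the symmetry of `DG` the integrand is
`d/dt (t ⟪G (γ t), W⟫)`, so the integral is `⟪G U, W⟫`. -/

theorem StarConvex.smul_add_one_sub_smul_mem {E : Type*} [AddCommGroup E] [Module ℝ E]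
    {s : Set E} {x y : E} (hs : StarConvex ℝ x s) (hy : y ∈ s) {t : ℝ} (ht : t ∈ Icc 0 1) :
    t • y + (1 - t) • x ∈ s := by
  simpa [add_comm] using hs hy (sub_nonneg.2 ht.2) ht.1 (by ring)

theorem IsCompact.exists_thickening_subset_forall_norm_le {X E : Type*} [PseudoMetricSpace X]
    [SeminormedAddCommGroup E] {K U : Set X} {f : X → E} (hK : IsCompact K) (hU : IsOpen U)
    (hKU : K ⊆ U) (hf : ContinuousOn f U) :
    ∃ δ > 0, ∃ C, thickening δ K ⊆ U ∧ ∀ y ∈ thickening δ K, ‖f y‖ ≤ C := by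
  obtain ⟨M, hM⟩ := hK.exists_bound_of_continuousOn (hf.mono hKU)
  have hV : IsOpen (U ∩ (fun y => ‖f y‖) ⁻¹' Iio (M + 1)) :=
    hf.norm.isOpen_inter_preimage hU isOpen_Iio
  obtain ⟨δ, hδ, hδV⟩ := hK.exists_thickening_subset_open hV
    fun y hy => ⟨hKU hy, (hM y hy).trans_lt (lt_add_one M)⟩
  exact ⟨δ, hδ, M + 1, fun y hy => (hδV hy).1, fun y hy => (hδV hy).2.le⟩

section Potential

variable {Y : Type*} [NormedAddCommGroup Y] [InnerProductSpace ℝ Y]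

theorem norm_smul_innerSL_comp_add_innerSL_le {t : ℝ} (ht : |t| ≤ 1) (v w : Y) (A : Y →L[ℝ] Y) :
    ‖t • (innerSL ℝ v).comp A + innerSL ℝ w‖ ≤ ‖v‖ * ‖A‖ + ‖w‖ := by
  have hcomp : ‖(innerSL ℝ v).comp A‖ ≤ ‖v‖ * ‖A‖ := by
    simpa only [innerSL_apply_norm] using (innerSL ℝ v).opNorm_comp_le A
  calc ‖t • (innerSL ℝ v).comp A + innerSL ℝ w‖
      ≤ |t| * ‖(innerSL ℝ v).comp A‖ + ‖w‖ := by
        simpa only [norm_smul, Real.norm_eq_abs, innerSL_apply_norm] using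
          norm_add_le (t • (innerSL ℝ v).comp A) (innerSL ℝ w)
    _ ≤ ‖v‖ * ‖A‖ + ‖w‖ := by
        grw [(mul_le_of_le_one_left (norm_nonneg _) ht).trans hcomp]

theorem hasFDerivAt_inner_smul_add_one_sub_smul {G : Y → Y} {G' : Y →L[ℝ] Y} {U₀ x : Y}
    {t : ℝ} (hG : HasFDerivAt G G' (t • x + (1 - t) • U₀)) :
    HasFDerivAt (fun x' => ⟪G (t • x' + (1 - t) • U₀), x' - U₀⟫)
      (t • (innerSL ℝ (x - U₀)).comp G' + innerSL ℝ (G (t • x + (1 - t) • U₀))) x := by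
  have hline : HasFDerivAt (fun x' : Y => t • x' + (1 - t) • U₀)
      (t • ContinuousLinearMap.id ℝ Y) x :=
    ((hasFDerivAt_id x).const_smul t).add_const _
  refine ((hG.comp x hline).inner ℝ ((hasFDerivAt_id x).sub_const U₀)).congr_fderiv ?_
  ext W
  simp only [ContinuousLinearMap.comp_apply, ContinuousLinearMap.prod_apply,
    ContinuousLinearMap.comp_smulₛₗ, ContinuousLinearMap.comp_id, Real.ringHom_apply,
    ContinuousLinearMap.id_apply, ContinuousLinearMap.sub_comp, fderivInnerCLM_apply, add_apply,
    sub_apply, smul_apply, coe_innerSL_apply, map_sub, inner_sub_left, real_inner_smul_right,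
    real_inner_comm, smul_eq_mul, Function.comp_apply, id_eq]
  ring

theorem hasDerivAt_mul_inner_smul_add_one_sub_smul {G : Y → Y} {G' : Y →L[ℝ] Y} {U₀ U W : Y}
    {t : ℝ} (hG : HasFDerivAt G G' (t • U + (1 - t) • U₀)) :
    HasDerivAt (fun s : ℝ => s * ⟪G (s • U + (1 - s) • U₀), W⟫)
      (t * ⟪G' (U - U₀), W⟫ + ⟪G (t • U + (1 - t) • U₀), W⟫) t := by
  have hline : HasDerivAt (fun s : ℝ => s • U + (1 - s) • U₀) (U - U₀) t := by
    convert ((hasDerivAt_id' t).smul_const U).add (((hasDerivAt_id' t).const_sub 1).smul_const U₀)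
      using 1
    · rfl
    · rw [one_smul, neg_smul, one_smul, sub_eq_add_neg]
  refine ((hasDerivAt_id' t).mul
    ((hG.comp_hasDerivAt t hline).inner ℝ (hasDerivAt_const t W))).congr_deriv ?_
  simp only [Function.comp_apply, inner_zero_right, zero_add, one_mul]
  ring

noncomputable def potential (G : Y → Y) (U₀ x : Y) : ℝ :=
  ∫ t in (0 : ℝ)..1, ⟪G (t • x + (1 - t) • U₀), x - U₀⟫

noncomputable def potentialIntegrandFDeriv (G : Y → Y) (U₀ x : Y) (t : ℝ) : Y →L[ℝ] ℝ :=
  t • (innerSL ℝ (x - U₀)).comp (fderiv ℝ G (t • x + (1 - t) • U₀)) +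
    innerSL ℝ (G (t • x + (1 - t) • U₀))

variable {D : Set Y} {G : Y → Y} {U₀ U x : Y}

theorem continuousOn_potentialIntegrandFDeriv (hD : IsOpen D) (hG : ContDiffOn ℝ 1 G D)
    (hx : ∀ t ∈ Icc (0 : ℝ) 1, t • x + (1 - t) • U₀ ∈ D) :
    ContinuousOn (potentialIntegrandFDeriv G U₀ x) (Icc 0 1) := by
  have hline : ContinuousOn (fun t : ℝ => t • x + (1 - t) • U₀) (Icc 0 1) := by fun_prop
  exact (continuousOn_id.smul (continuousOn_const.clm_comp
      ((hG.continuousOn_fderiv_of_isOpen hD le_rfl).comp hline hx))).add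
    ((innerSL ℝ).continuous.comp_continuousOn (hG.continuousOn.comp hline hx))

theorem hasFDerivAt_potential_integral (hD : IsOpen D)
    (hstar : StarConvex ℝ U₀ D) (hG : ContDiffOn ℝ 1 G D) (hU : U ∈ D) :
    HasFDerivAt (potential G U₀) (∫ t in (0 : ℝ)..1, potentialIntegrandFDeriv G U₀ U t) U := by
  set K := (fun t : ℝ => t • U + (1 - t) • U₀) '' Icc 0 1
  have hK : IsCompact K := isCompact_Icc.image (by fun_prop)
  have hKD : K ⊆ D := by
    rintro _ ⟨t, ht, rfl⟩
    exact hstar.smul_add_one_sub_smul_mem hU ht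
  obtain ⟨δ, hδ, C, hδD, hC⟩ := hK.exists_thickening_subset_forall_norm_le hD hKD
    (hG.continuousOn.prodMk (hG.continuousOn_fderiv_of_isOpen hD le_rfl))
  have hthick : ∀ x ∈ ball U δ, ∀ t ∈ Icc (0 : ℝ) 1,
      t • x + (1 - t) • U₀ ∈ thickening δ K := by
    intro x hx t ht
    refine mem_thickening_iff.2 ⟨_, ⟨t, ht, rfl⟩, ?_⟩
    have : t • x + (1 - t) • U₀ - (t • U + (1 - t) • U₀) = t • (x - U) := by
      rw [smul_sub]; abel
    rw [dist_eq_norm, this, norm_smul, Real.norm_of_nonneg ht.1]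
    exact (mul_le_of_le_one_left (norm_nonneg _) ht.2).trans_lt (mem_ball_iff_norm.1 hx)
  have hball : ∀ x ∈ ball U δ, ∀ t ∈ Icc (0 : ℝ) 1, t • x + (1 - t) • U₀ ∈ D :=
    fun x hx t ht => hδD (hthick x hx t ht)
  have hint : ∀ x ∈ ball U δ,
      IntervalIntegrable (fun t => ⟪G (t • x + (1 - t) • U₀), x - U₀⟫) volume 0 1 :=
    fun x hx => ContinuousOn.intervalIntegrable_of_Icc zero_le_one
      ((hG.continuousOn.comp (by fun_prop) (hball x hx)).inner continuousOn_const)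
  refine intervalIntegral.hasFDerivAt_integral_of_dominated_of_fderiv_le
    (bound := fun _ => (‖U - U₀‖ + δ) * C + C) (ball_mem_nhds U hδ) ?_
    (hint U (mem_ball_self hδ)) ?_ ?_ intervalIntegrable_const ?_
  · filter_upwards [ball_mem_nhds U hδ] with x hx
      using (hint x hx).aestronglyMeasurable_restrict_uIoc
  · exact ((continuousOn_potentialIntegrandFDeriv hD hG fun t ht => hKD ⟨t, ht, rfl⟩)
      |>.intervalIntegrable_of_Icc zero_le_one).aestronglyMeasurable_restrict_uIoc
  · filter_upwards with t ht x hx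
    rw [uIoc_of_le zero_le_one] at ht
    have hGC := hC _ (hthick x hx t (Ioc_subset_Icc_self ht))
    have hxU₀ : ‖x - U₀‖ ≤ ‖U - U₀‖ + δ := by
      linarith [norm_sub_le_norm_sub_add_norm_sub x U U₀, mem_ball_iff_norm.1 hx]
    calc ‖potentialIntegrandFDeriv G U₀ x t‖
        ≤ ‖x - U₀‖ * ‖fderiv ℝ G (t • x + (1 - t) • U₀)‖ + ‖G (t • x + (1 - t) • U₀)‖ :=
          norm_smul_innerSL_comp_add_innerSL_le
            (by rw [abs_of_pos ht.1]; exact ht.2) _ _ _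
      _ ≤ (‖U - U₀‖ + δ) * C + C := by
          gcongr
          exacts [(norm_snd_le _).trans hGC, (norm_fst_le _).trans hGC]
  · filter_upwards with t ht x hx
    rw [uIoc_of_le zero_le_one] at ht
    exact hasFDerivAt_inner_smul_add_one_sub_smul <|
      (hG.differentiableOn one_ne_zero).hasFDerivAt
        (hD.mem_nhds (hball x hx t (Ioc_subset_Icc_self ht)))

theorem integral_potentialIntegrandFDeriv (hD : IsOpen D) (hstar : StarConvex ℝ U₀ D)
    (hG : ContDiffOn ℝ 1 G D)
    (hsym : ∀ U ∈ D, ∀ W₁ W₂ : Y, ⟪fderiv ℝ G U W₁, W₂⟫ = ⟪W₁, fderiv ℝ G U W₂⟫) (hU : U ∈ D) :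
    ∫ t in (0 : ℝ)..1, potentialIntegrandFDeriv G U₀ U t = innerSL ℝ (G U) := by
  have hseg : ∀ t ∈ Icc (0 : ℝ) 1, t • U + (1 - t) • U₀ ∈ D :=
    fun t ht => hstar.smul_add_one_sub_smul_mem hU ht
  have hcont := continuousOn_potentialIntegrandFDeriv hD hG hseg
  ext W
  rw [ContinuousLinearMap.intervalIntegral_apply (hcont.intervalIntegrable_of_Icc zero_le_one)]
  have hderiv : ∀ t ∈ uIcc (0 : ℝ) 1,
      HasDerivAt (fun s : ℝ => s * ⟪G (s • U + (1 - s) • U₀), W⟫)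
        (potentialIntegrandFDeriv G U₀ U t W) t := by
    intro t ht
    rw [uIcc_of_le zero_le_one] at ht
    convert hasDerivAt_mul_inner_smul_add_one_sub_smul
      ((hG.differentiableOn one_ne_zero).hasFDerivAt (hD.mem_nhds (hseg t ht))) using 1
    simp only [potentialIntegrandFDeriv, add_apply, smul_apply, ContinuousLinearMap.comp_apply,
      innerSL_apply_apply, smul_eq_mul, hsym _ (hseg t ht)]
  rw [integral_eq_sub_of_hasDerivAt hderiv
    (((ContinuousLinearMap.apply ℝ ℝ W).continuous.comp_continuousOn hcont)
      |>.intervalIntegrable_of_Icc zero_le_one)]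
  simp

theorem hasFDerivAt_potential (hD : IsOpen D) (hstar : StarConvex ℝ U₀ D)
    (hG : ContDiffOn ℝ 1 G D)
    (hsym : ∀ U ∈ D, ∀ W₁ W₂ : Y, ⟪fderiv ℝ G U W₁, W₂⟫ = ⟪W₁, fderiv ℝ G U W₂⟫) (hU : U ∈ D) :
    HasFDerivAt (potential G U₀) (innerSL ℝ (G U)) U :=
  integral_potentialIntegrandFDeriv hD hstar hG hsym hU ▸
    hasFDerivAt_potential_integral hD hstar hG hU

end Potential

theorem stmt8_general {Y : Type*} [NormedAddCommGroup Y] [InnerProductSpace ℝ Y]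
    (D : Set Y) (hD : IsOpen D) (U₀ : Y) (hstar : StarConvex ℝ U₀ D)
    (G : Y → Y) (hG : ContDiffOn ℝ 1 G D)
    (hsym : ∀ U ∈ D, ∀ W₁ W₂ : Y,
      ⟪fderiv ℝ G U W₁, W₂⟫ = ⟪W₁, fderiv ℝ G U W₂⟫) :
    ∀ U ∈ D,
      HasFDerivAt (fun U' : Y => ∫ t in (0:ℝ)..1, ⟪G (t • U' + (1 - t) • U₀), U' - U₀⟫)
        (innerSL ℝ (G U)) U :=
  fun _ hU => hasFDerivAt_potential hD hstar hG hsym hU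

/-- Integrability lemma on a real Hilbert space: if `D` is open and star-shaped with
respect to `U₀ ∈ D`, `G` is `C¹` on `D`, and each derivative `DG(U)` is symmetric, then
`V(U) = ∫₀¹ ⟨G(tU + (1−t)U₀), U − U₀⟩ dt` is Fréchet differentiable on `D` with
`DV(U)·W = ⟨G(U), W⟩`, i.e. `G = ∇V` is a gradient vector field. -/
theorem stmt8 {Y : Type*} [NormedAddCommGroup Y] [InnerProductSpace ℝ Y] [CompleteSpace Y]
    (D : Set Y) (hD : IsOpen D) (U₀ : Y) (hU₀ : U₀ ∈ D) (hstar : StarConvex ℝ U₀ D)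
    (G : Y → Y) (hG : ContDiffOn ℝ 1 G D)
    (hsym : ∀ U ∈ D, ∀ W₁ W₂ : Y,
      ⟪fderiv ℝ G U W₁, W₂⟫ = ⟪W₁, fderiv ℝ G U W₂⟫) :
    ∀ U ∈ D,
      HasFDerivAt (fun U' : Y => ∫ t in (0:ℝ)..1, ⟪G (t • U' + (1 - t) • U₀), U' - U₀⟫)
        (innerSL ℝ (G U)) U :=
  stmt8_general D hD U₀ hstar G hG hsym
end

section
/- For every real ℓ > 1/2 there exists a constant c = c(ℓ) > 0, independent of τ, such that for all τ ≥ 0 and all sequences a, b : ℤ → ℂ with ‖a‖_{τ,ℓ} < ∞ and ‖b‖_{τ,ℓ} < ∞, the convolution a⋆b (given by (a⋆b)_k = Σ_{j∈ℤ} a_j·b_{k−j}) is well defined and satisfies ‖a⋆b‖_{τ,ℓ} ≤ c·‖a‖_{τ,ℓ}·‖b‖_{τ,ℓ}. Equivalently, the Gevrey space G_{τ,ℓ}(S¹;ℂ) of periodic functions with this weighted Fourier-coefficient norm is a topological algebra under pointwise multiplication. -/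
/-!
With `⟨k⟩ = max 1 |k|` (equal to `|k|` for `k ≠ 0`, so that the separate `|a₀|²` term is
absorbed), `‖a‖_{τ,ℓ}` is the `ℓ²` norm of `W·|a|` for the weight `W k = ⟨k⟩^ℓ e^{τ|k|}`.
Since `⟨j + m⟩ ≤ ⟨j⟩ + ⟨m⟩` and `e^{τ|j+m|} ≤ e^{τ|j|} e^{τ|m|}`, with `E k = e^{τ|k|}` we get
`W (j + m) ≤ 2^ℓ (W j · E m + E j · W m)`, hence `W·|a⋆b| ≤ 2^ℓ (W|a| ⋆ E|b| + E|a| ⋆ W|b|)`.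
Young's inequality `ℓ² ⋆ ℓ¹ ⊆ ℓ²` reduces the claim to bounding `‖E·|a|‖_{ℓ¹}`, and
Cauchy–Schwarz gives `‖E·|a|‖_{ℓ¹} ≤ (∑ ⟨k⟩^{-2ℓ})^{1/2} ‖a‖_{τ,ℓ}`, finite because `ℓ > 1/2`.
All estimates are in `ℝ≥0∞`, where they need no summability; finiteness of the norms is used
only for the convergence of the convolution sums.
-/

/-- The squared Gevrey norm on Fourier coefficient sequences over `ℤ`:
`‖a‖_{τ,ℓ}² = |a₀|² + Σ_{k∈ℤ} |k|^{2ℓ}·e^{2τ|k|}·|a_k|²` (possibly `+∞`). -/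
noncomputable def zGevreyNormSq (τ ℓ : ℝ) (a : ℤ → ℂ) : ENNReal :=
  ENNReal.ofReal (‖a 0‖ ^ 2) +
    ∑' k : ℤ, ENNReal.ofReal
      (|(k : ℝ)| ^ (2 * ℓ) * Real.exp (2 * τ * |(k : ℝ)|) * ‖a k‖ ^ 2)

open ENNReal MeasureTheory

namespace ENNReal

variable {ι : Type*}

noncomputable def l2Norm (f : ι → ℝ≥0∞) : ℝ≥0∞ := (∑' i, f i ^ 2) ^ (1 / 2 : ℝ)

theorem l2Norm_sq (f : ι → ℝ≥0∞) : l2Norm f ^ 2 = ∑' i, f i ^ 2 := by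
  rw [l2Norm, ← rpow_natCast, ← rpow_mul]; norm_num

theorem l2Norm_le_iff {f : ι → ℝ≥0∞} {c : ℝ≥0∞} : l2Norm f ≤ c ↔ ∑' i, f i ^ 2 ≤ c ^ 2 := by
  rw [← l2Norm_sq, ENNReal.pow_le_pow_left_iff two_ne_zero]

theorem l2Norm_ne_top {f : ι → ℝ≥0∞} (h : ∑' i, f i ^ 2 ≠ ⊤) : l2Norm f ≠ ⊤ :=
  rpow_ne_top_of_nonneg (by norm_num) h

theorem le_l2Norm (f : ι → ℝ≥0∞) (i : ι) : f i ≤ l2Norm f := by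
  rw [← ENNReal.pow_le_pow_left_iff two_ne_zero, l2Norm_sq]
  exact ENNReal.le_tsum i

theorem l2Norm_mono {f g : ι → ℝ≥0∞} (h : ∀ i, f i ≤ g i) : l2Norm f ≤ l2Norm g := by
  rw [l2Norm_le_iff, l2Norm_sq]
  exact ENNReal.tsum_le_tsum fun i => pow_le_pow_left' (h i) 2

theorem l2Norm_const_mul (c : ℝ≥0∞) (f : ι → ℝ≥0∞) :
    l2Norm (fun i => c * f i) = c * l2Norm f := by
  simp only [l2Norm, mul_pow, ENNReal.tsum_mul_left]
  rw [mul_rpow_of_nonneg _ _ (by norm_num), ← rpow_natCast, ← rpow_mul]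
  norm_num

theorem tsum_mul_le_l2Norm_mul_l2Norm (f g : ι → ℝ≥0∞) :
    ∑' i, f i * g i ≤ l2Norm f * l2Norm g := by
  let _ : MeasurableSpace ι := ⊤
  have := lintegral_mul_le_Lp_mul_Lq (Measure.count : Measure ι) .two_two
    (Measurable.of_discrete (f := f)).aemeasurable (Measurable.of_discrete (f := g)).aemeasurable
  simpa [l2Norm, lintegral_count, rpow_two] using this

theorem l2Norm_add_le (f g : ι → ℝ≥0∞) : l2Norm (f + g) ≤ l2Norm f + l2Norm g := by
  let _ : MeasurableSpace ι := ⊤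
  have := lintegral_Lp_add_le (μ := (Measure.count : Measure ι))
    (Measurable.of_discrete (f := f)).aemeasurable (Measurable.of_discrete (f := g)).aemeasurable
    one_le_two
  simpa [l2Norm, lintegral_count, rpow_two] using this

theorem sq_tsum_mul_le (f g : ι → ℝ≥0∞) :
    (∑' i, f i * g i) ^ 2 ≤ (∑' i, f i ^ 2) * ∑' i, g i ^ 2 := by
  rw [← l2Norm_sq, ← l2Norm_sq, ← mul_pow]
  exact pow_le_pow_left' (tsum_mul_le_l2Norm_mul_l2Norm f g) 2

theorem sq_tsum_mul_le_tsum_mul_tsum (f g : ι → ℝ≥0∞) :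
    (∑' i, f i * g i) ^ 2 ≤ (∑' i, f i) * ∑' i, f i * g i ^ 2 := by
  have hsqrt (x : ℝ≥0∞) : (x ^ (1 / 2 : ℝ)) ^ 2 = x := by
    rw [← rpow_natCast, ← rpow_mul]; norm_num
  calc (∑' i, f i * g i) ^ 2
      = (∑' i, f i ^ (1 / 2 : ℝ) * (f i ^ (1 / 2 : ℝ) * g i)) ^ 2 := by
        simp_rw [← mul_assoc, ← sq, hsqrt]
    _ ≤ (∑' i, f i) * ∑' i, f i * g i ^ 2 := by
        simpa only [mul_pow, hsqrt] using sq_tsum_mul_le (fun i => f i ^ (1 / 2 : ℝ))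
          (fun i => f i ^ (1 / 2 : ℝ) * g i)

theorem l2Norm_conv_le {G : Type*} [AddGroup G] (f g : G → ℝ≥0∞) :
    l2Norm (fun k => ∑' j, f j * g (k - j)) ≤ (∑' j, f j) * l2Norm g := by
  rw [l2Norm_le_iff, mul_pow, l2Norm_sq]
  calc ∑' k, (∑' j, f j * g (k - j)) ^ 2
      ≤ ∑' k, (∑' j, f j) * ∑' j, f j * g (k - j) ^ 2 :=
        ENNReal.tsum_le_tsum fun k => sq_tsum_mul_le_tsum_mul_tsum f (fun j => g (k - j))
    _ = (∑' j, f j) * ∑' j, f j * ∑' k, g (k - j) ^ 2 := by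
        rw [ENNReal.tsum_mul_left, ENNReal.tsum_comm]
        simp_rw [ENNReal.tsum_mul_left]
    _ = (∑' j, f j) ^ 2 * ∑' k, g k ^ 2 := by
        have hshift (j : G) : ∑' k, g (k - j) ^ 2 = ∑' k, g k ^ 2 :=
          (Equiv.subRight j).tsum_eq fun k => g k ^ 2
        simp_rw [hshift, ENNReal.tsum_mul_right]
        ring

theorem tsum_mul_sub_comm {G : Type*} [AddCommGroup G] (f g : G → ℝ≥0∞) (k : G) :
    ∑' j, f j * g (k - j) = ∑' j, g j * f (k - j) := by
  rw [← (Equiv.subLeft k).tsum_eq]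
  simp [mul_comm]

end ENNReal

noncomputable def polyWeight (ℓ : ℝ) (k : ℤ) : ℝ≥0∞ := ENNReal.ofReal (max 1 |(k : ℝ)|) ^ ℓ

noncomputable def expWeight (τ : ℝ) (k : ℤ) : ℝ≥0∞ := ENNReal.ofReal (Real.exp (τ * |(k : ℝ)|))

noncomputable def gevreyWeight (τ ℓ : ℝ) (k : ℤ) : ℝ≥0∞ := polyWeight ℓ k * expWeight τ k

theorem polyWeight_ne_zero (ℓ : ℝ) (k : ℤ) : polyWeight ℓ k ≠ 0 := by
  simp [polyWeight, ENNReal.rpow_eq_zero_iff]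

theorem polyWeight_ne_top (ℓ : ℝ) (k : ℤ) : polyWeight ℓ k ≠ ⊤ := by
  simp [polyWeight, ENNReal.rpow_eq_top_iff]

theorem polyWeight_zero (ℓ : ℝ) : polyWeight ℓ 0 = 1 := by
  simp [polyWeight]

theorem one_le_polyWeight {ℓ : ℝ} (hℓ : 0 ≤ ℓ) (k : ℤ) : 1 ≤ polyWeight ℓ k :=
  (one_rpow ℓ).symm.trans_le
    (ENNReal.rpow_le_rpow (ENNReal.one_le_ofReal.2 (le_max_left 1 |(k : ℝ)|)) hℓ)

theorem one_le_expWeight {τ : ℝ} (hτ : 0 ≤ τ) (k : ℤ) : 1 ≤ expWeight τ k :=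
  ENNReal.one_le_ofReal.2 (Real.one_le_exp (by positivity))

theorem one_le_gevreyWeight {τ ℓ : ℝ} (hτ : 0 ≤ τ) (hℓ : 0 ≤ ℓ) (k : ℤ) :
    1 ≤ gevreyWeight τ ℓ k :=
  one_le_mul (one_le_polyWeight hℓ k) (one_le_expWeight hτ k)

theorem polyWeight_add_le {ℓ : ℝ} (hℓ : 0 ≤ ℓ) (j m : ℤ) :
    polyWeight ℓ (j + m) ≤ 2 ^ ℓ * (polyWeight ℓ j + polyWeight ℓ m) := by
  have hbracket : max 1 |((j + m : ℤ) : ℝ)| ≤ max 1 |(j : ℝ)| + max 1 |(m : ℝ)| := by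
    push_cast
    refine max_le (by linarith [le_max_left 1 |(j : ℝ)|, le_max_left 1 |(m : ℝ)|]) ?_
    exact (abs_add_le _ _).trans (add_le_add (le_max_right _ _) (le_max_right _ _))
  calc polyWeight ℓ (j + m)
      ≤ (ENNReal.ofReal (max 1 |(j : ℝ)|) + ENNReal.ofReal (max 1 |(m : ℝ)|)) ^ ℓ := by
        rw [← ENNReal.ofReal_add (by positivity) (by positivity)]
        exact ENNReal.rpow_le_rpow (ENNReal.ofReal_le_ofReal hbracket) hℓ
    _ ≤ 2 ^ ℓ * (polyWeight ℓ j + polyWeight ℓ m) :=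
        ENNReal.add_rpow_le_two_rpow_mul_rpow_add_rpow _ _ hℓ

theorem expWeight_add_le {τ : ℝ} (hτ : 0 ≤ τ) (j m : ℤ) :
    expWeight τ (j + m) ≤ expWeight τ j * expWeight τ m := by
  rw [expWeight, expWeight, expWeight, ← ENNReal.ofReal_mul (Real.exp_pos _).le, ← Real.exp_add]
  refine ENNReal.ofReal_le_ofReal (Real.exp_le_exp.2 ?_)
  push_cast
  nlinarith [abs_add_le (j : ℝ) m]

theorem gevreyWeight_add_le {τ ℓ : ℝ} (hτ : 0 ≤ τ) (hℓ : 0 ≤ ℓ) (j m : ℤ) :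
    gevreyWeight τ ℓ (j + m) ≤
      2 ^ ℓ * (gevreyWeight τ ℓ j * expWeight τ m + expWeight τ j * gevreyWeight τ ℓ m) :=
  calc gevreyWeight τ ℓ (j + m)
      ≤ 2 ^ ℓ * (polyWeight ℓ j + polyWeight ℓ m) * (expWeight τ j * expWeight τ m) :=
        mul_le_mul' (polyWeight_add_le hℓ j m) (expWeight_add_le hτ j m)
    _ = 2 ^ ℓ * (gevreyWeight τ ℓ j * expWeight τ m + expWeight τ j * gevreyWeight τ ℓ m) := by
        simp only [gevreyWeight]; ring

theorem gevreyWeight_mul_enorm_sq {τ ℓ : ℝ} (hℓ : 0 < ℓ) (a : ℤ → ℂ) (k : ℤ) :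
    (gevreyWeight τ ℓ k * ‖a k‖ₑ) ^ 2 = (if k = 0 then ENNReal.ofReal (‖a 0‖ ^ 2) else 0) +
      ENNReal.ofReal (|(k : ℝ)| ^ (2 * ℓ) * Real.exp (2 * τ * |(k : ℝ)|) * ‖a k‖ ^ 2) := by
  rw [gevreyWeight, polyWeight, expWeight, ← ofReal_norm,
    ENNReal.ofReal_rpow_of_nonneg (by positivity) hℓ.le,
    ← ENNReal.ofReal_mul (by positivity), ← ENNReal.ofReal_mul (by positivity),
    ← ENNReal.ofReal_pow (by positivity)]
  split_ifs with hk
  · subst hk; simp [Real.zero_rpow (by positivity : 2 * ℓ ≠ 0)]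
  · have hk1 : (1 : ℝ) ≤ |(k : ℝ)| := by exact_mod_cast Int.one_le_abs hk
    rw [max_eq_right hk1, zero_add, mul_pow, mul_pow, ← Real.rpow_natCast, ← Real.rpow_mul
      (abs_nonneg _), ← Real.exp_nat_mul]
    ring_nf

theorem zGevreyNormSq_eq_tsum {ℓ : ℝ} (τ : ℝ) (hℓ : 0 < ℓ) (a : ℤ → ℂ) :
    zGevreyNormSq τ ℓ a = ∑' k, (gevreyWeight τ ℓ k * ‖a k‖ₑ) ^ 2 := by
  simp_rw [gevreyWeight_mul_enorm_sq hℓ, ENNReal.tsum_add, tsum_ite_eq, zGevreyNormSq]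

theorem summable_max_one_abs_rpow_neg {s : ℝ} (hs : 1 < s) :
    Summable fun k : ℤ => max 1 |(k : ℝ)| ^ (-s) := by
  refine (Real.summable_abs_int_rpow hs).of_norm_bounded_eventually ?_
  filter_upwards [Filter.eventually_cofinite_ne 0] with k hk
  have hk1 : (1 : ℝ) ≤ |(k : ℝ)| := by exact_mod_cast Int.one_le_abs hk
  rw [max_eq_right hk1, Real.norm_of_nonneg (by positivity)]

theorem l2Norm_polyWeight_inv_ne_top {ℓ : ℝ} (hℓ : 1 / 2 < ℓ) :
    l2Norm (fun k => (polyWeight ℓ k)⁻¹) ≠ ⊤ := by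
  have hterm (k : ℤ) :
      (polyWeight ℓ k)⁻¹ ^ 2 = ENNReal.ofReal (max 1 |(k : ℝ)| ^ (-(2 * ℓ))) := by
    rw [polyWeight, ← rpow_neg, ← rpow_natCast, ← rpow_mul,
      ENNReal.ofReal_rpow_of_pos (by positivity)]
    ring_nf
  refine l2Norm_ne_top ?_
  simp_rw [hterm]
  rw [← ENNReal.ofReal_tsum_of_nonneg (fun k => by positivity)
    (summable_max_one_abs_rpow_neg (by linarith))]
  exact ofReal_ne_top

theorem tsum_expWeight_mul_le (τ ℓ : ℝ) (x : ℤ → ℝ≥0∞) :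
    ∑' k, expWeight τ k * x k ≤
      l2Norm (fun k => (polyWeight ℓ k)⁻¹) * l2Norm (fun k => gevreyWeight τ ℓ k * x k) := by
  have hsplit (k : ℤ) :
      expWeight τ k * x k = (polyWeight ℓ k)⁻¹ * (gevreyWeight τ ℓ k * x k) := by
    rw [gevreyWeight, mul_assoc, ENNReal.inv_mul_cancel_left (polyWeight_ne_zero ℓ k)
      (polyWeight_ne_top ℓ k)]
  simp_rw [hsplit]
  exact tsum_mul_le_l2Norm_mul_l2Norm _ _

theorem enorm_tsum_mul_sub_le (a b : ℤ → ℂ) (k : ℤ) :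
    ‖∑' j, a j * b (k - j)‖ₑ ≤ ∑' j, ‖a j‖ₑ * ‖b (k - j)‖ₑ := by
  simpa only [enorm_mul] using enorm_tsum_le_tsum_enorm (f := fun j => a j * b (k - j))

theorem tsum_enorm_mul_sub_le {τ ℓ : ℝ} (hτ : 0 ≤ τ) (hℓ : 0 ≤ ℓ) (a b : ℤ → ℂ) (k : ℤ) :
    ∑' j, ‖a j‖ₑ * ‖b (k - j)‖ₑ ≤
      (∑' j, expWeight τ j * ‖a j‖ₑ) * l2Norm (fun m => gevreyWeight τ ℓ m * ‖b m‖ₑ) := by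
  rw [← ENNReal.tsum_mul_right]
  refine ENNReal.tsum_le_tsum fun j => mul_le_mul' ?_ ?_
  · exact le_mul_of_one_le_left' (one_le_expWeight hτ j)
  · exact (le_mul_of_one_le_left' (one_le_gevreyWeight hτ hℓ (k - j))).trans
      (le_l2Norm (fun m => gevreyWeight τ ℓ m * ‖b m‖ₑ) (k - j))

theorem gevreyWeight_mul_enorm_tsum_mul_sub_le {τ ℓ : ℝ} (hτ : 0 ≤ τ) (hℓ : 0 ≤ ℓ)
    (a b : ℤ → ℂ) (k : ℤ) :
    gevreyWeight τ ℓ k * ‖∑' j, a j * b (k - j)‖ₑ ≤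
      2 ^ ℓ * ((∑' j, (gevreyWeight τ ℓ j * ‖a j‖ₑ) * (expWeight τ (k - j) * ‖b (k - j)‖ₑ)) +
        ∑' j, (expWeight τ j * ‖a j‖ₑ) * (gevreyWeight τ ℓ (k - j) * ‖b (k - j)‖ₑ)) := by
  calc gevreyWeight τ ℓ k * ‖∑' j, a j * b (k - j)‖ₑ
      ≤ ∑' j, gevreyWeight τ ℓ (j + (k - j)) * (‖a j‖ₑ * ‖b (k - j)‖ₑ) := by
        simp_rw [add_sub_cancel, ENNReal.tsum_mul_left]
        exact mul_le_mul_right (enorm_tsum_mul_sub_le a b k) _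
    _ ≤ ∑' j, 2 ^ ℓ * (gevreyWeight τ ℓ j * expWeight τ (k - j) +
          expWeight τ j * gevreyWeight τ ℓ (k - j)) * (‖a j‖ₑ * ‖b (k - j)‖ₑ) :=
        ENNReal.tsum_le_tsum fun j => mul_le_mul_left (gevreyWeight_add_le hτ hℓ j (k - j)) _
    _ = _ := by
        rw [← ENNReal.tsum_add, ← ENNReal.tsum_mul_left]
        exact tsum_congr fun j => by ring

theorem l2Norm_gevreyWeight_mul_enorm_tsum_mul_sub_le {τ ℓ : ℝ} (hτ : 0 ≤ τ) (hℓ : 0 ≤ ℓ)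
    (a b : ℤ → ℂ) :
    l2Norm (fun k => gevreyWeight τ ℓ k * ‖∑' j, a j * b (k - j)‖ₑ) ≤
      2 ^ ℓ * ((∑' j, expWeight τ j * ‖b j‖ₑ) * l2Norm (fun k => gevreyWeight τ ℓ k * ‖a k‖ₑ) +
        (∑' j, expWeight τ j * ‖a j‖ₑ) * l2Norm (fun k => gevreyWeight τ ℓ k * ‖b k‖ₑ)) := by
  set A := fun k => gevreyWeight τ ℓ k * ‖a k‖ₑ
  set B := fun k => gevreyWeight τ ℓ k * ‖b k‖ₑ
  set Ea := fun k => expWeight τ k * ‖a k‖ₑ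
  set Eb := fun k => expWeight τ k * ‖b k‖ₑ
  calc l2Norm (fun k => gevreyWeight τ ℓ k * ‖∑' j, a j * b (k - j)‖ₑ)
      ≤ l2Norm (fun k => 2 ^ ℓ * ((fun k => ∑' j, Eb j * A (k - j)) +
          fun k => ∑' j, Ea j * B (k - j)) k) := by
        refine l2Norm_mono fun k => ?_
        rw [Pi.add_apply, ← tsum_mul_sub_comm A Eb k]
        exact gevreyWeight_mul_enorm_tsum_mul_sub_le hτ hℓ a b k
    _ ≤ 2 ^ ℓ * (l2Norm (fun k => ∑' j, Eb j * A (k - j)) +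
          l2Norm (fun k => ∑' j, Ea j * B (k - j))) := by
        rw [l2Norm_const_mul]
        exact mul_le_mul_right (l2Norm_add_le _ _) _
    _ ≤ 2 ^ ℓ * ((∑' j, Eb j) * l2Norm A + (∑' j, Ea j) * l2Norm B) :=
        mul_le_mul_right (add_le_add (l2Norm_conv_le Eb A) (l2Norm_conv_le Ea B)) _

theorem zGevreyNormSq_rpow_half {ℓ : ℝ} (τ : ℝ) (hℓ : 0 < ℓ) (a : ℤ → ℂ) :
    zGevreyNormSq τ ℓ a ^ (1 / 2 : ℝ) = l2Norm (fun k => gevreyWeight τ ℓ k * ‖a k‖ₑ) := by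
  rw [zGevreyNormSq_eq_tsum τ hℓ, l2Norm]

/-- The Gevrey space `G_{τ,ℓ}(S¹;ℂ)` is a topological algebra: for every `ℓ > 1/2`
there is a constant `c = c(ℓ) > 0`, independent of `τ`, such that for all `τ ≥ 0` and
sequences `a, b` of finite Gevrey norm, the convolution `a⋆b` is well defined and
satisfies `‖a⋆b‖_{τ,ℓ} ≤ c·‖a‖_{τ,ℓ}·‖b‖_{τ,ℓ}`. -/
theorem stmt9 (ℓ : ℝ) (hℓ : 1 / 2 < ℓ) :
    ∃ c : ℝ, 0 < c ∧ ∀ τ : ℝ, 0 ≤ τ → ∀ a b : ℤ → ℂ,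
      zGevreyNormSq τ ℓ a < ⊤ → zGevreyNormSq τ ℓ b < ⊤ →
      (∀ k : ℤ, Summable fun j : ℤ => a j * b (k - j)) ∧
      (zGevreyNormSq τ ℓ fun k => ∑' j : ℤ, a j * b (k - j)) ^ (1 / 2 : ℝ) ≤
        ENNReal.ofReal c * (zGevreyNormSq τ ℓ a) ^ (1 / 2 : ℝ) *
          (zGevreyNormSq τ ℓ b) ^ (1 / 2 : ℝ) := by
  have hℓ0 : 0 < ℓ := by linarith
  set K := l2Norm fun k => (polyWeight ℓ k)⁻¹
  have hK : K ≠ ⊤ := l2Norm_polyWeight_inv_ne_top hℓ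
  have hK0 : K ≠ 0 := by
    refine (zero_lt_one.trans_le ?_).ne'
    simpa [polyWeight_zero] using le_l2Norm (fun k => (polyWeight ℓ k)⁻¹) 0
  refine ⟨(2 * 2 ^ ℓ * K).toReal, toReal_pos (by simp [hK0]) (by finiteness),
    fun τ hτ a b ha hb => ?_⟩
  rw [zGevreyNormSq_rpow_half τ hℓ0, zGevreyNormSq_rpow_half τ hℓ0,
    zGevreyNormSq_rpow_half τ hℓ0, ofReal_toReal (by finiteness)]
  set A := l2Norm fun k => gevreyWeight τ ℓ k * ‖a k‖ₑ
  set B := l2Norm fun k => gevreyWeight τ ℓ k * ‖b k‖ₑ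
  have hA : A ≠ ⊤ := l2Norm_ne_top ((zGevreyNormSq_eq_tsum τ hℓ0 a).symm ▸ ha.ne)
  have hB : B ≠ ⊤ := l2Norm_ne_top ((zGevreyNormSq_eq_tsum τ hℓ0 b).symm ▸ hb.ne)
  have hEa : ∑' k, expWeight τ k * ‖a k‖ₑ ≤ K * A := tsum_expWeight_mul_le τ ℓ _
  have hEb : ∑' k, expWeight τ k * ‖b k‖ₑ ≤ K * B := tsum_expWeight_mul_le τ ℓ _
  refine ⟨fun k => Summable.of_enorm ?_, ?_⟩
  · simp_rw [enorm_mul]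
    refine ne_top_of_le_ne_top ?_ (tsum_enorm_mul_sub_le hτ hℓ0.le a b k)
    exact mul_ne_top (ne_top_of_le_ne_top (mul_ne_top hK hA) hEa) hB
  · calc _ ≤ 2 ^ ℓ * ((∑' j, expWeight τ j * ‖b j‖ₑ) * A + (∑' j, expWeight τ j * ‖a j‖ₑ) * B) :=
          l2Norm_gevreyWeight_mul_enorm_tsum_mul_sub_le hτ hℓ0.le a b
      _ ≤ 2 ^ ℓ * (K * B * A + K * A * B) := by gcongr
      _ = 2 * 2 ^ ℓ * K * A * B := by ring
end

section
/- Suppose the family (G^ℓ)_{ℓ=1}^{K+1} is of class 𝒞 on the scale (Y_k, U_k). Define F¹ = G¹ and recursively, for ℓ = 2, …, K+1, F^ℓ = G^ℓ − Σ_{i=2}^{ℓ} (1/i!) Σ_{ℓ₁+⋯+ℓ_i = ℓ, each ℓ_m ≥ 1} D_{ℓ₁}⋯D_{ℓ_{i−1}}F^{ℓ_i}, where (D_j g)(U) := Dg(U)·F^j(U) denotes the Lie derivative of g along F^j. Then the family (F^ℓ)_{ℓ=1}^{K+1} is also of class 𝒞. -/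
/-!
Strong induction on `ℓ`. Every block of a composition of `ℓ` with at least two parts is
smaller than `ℓ`, so the right-hand side of the recursion only involves `F^m` with `m < ℓ`.
Smoothness with bounded derivatives on a set is preserved by sums, scalar multiples,
composition with bounded linear maps on either side, and the pairing `(A, v) ↦ A v` (Leibniz
rule). In a Lie derivative `D_{ℓ₁} g` evaluated at rung `k`, the derivative of `g` is taken at
rung `k − ℓ₁`, where `g` has one more order of smoothness available because
`(j + 1) + (k − ℓ₁) ≤ j + k` when `ℓ₁ ≥ 1`.
-/

namespace Stmt12

variable (Y : ℕ → Type) [∀ k, NormedAddCommGroup (Y k)] [∀ k, NormedSpace ℝ (Y k)]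

/-- Transport along an equality of scale indices. -/
def ecast {a b : ℕ} (h : a = b) : Y a →L[ℝ] Y b := by
  subst h; exact ContinuousLinearMap.id ℝ (Y a)

variable (incl : ∀ j k : ℕ, j ≤ k → (Y k →L[ℝ] Y j))

/-- Iterated Lie derivative `D_{ℓ₁} ⋯ D_{ℓ_{i−1}} F^{ℓ_i}` along the coefficient
vector fields of the modified equation, represented at rung `k` of the scale.  For a
list `[ℓ₁, …, ℓ_i]` it maps `Y k` into `Y (k − (ℓ₁ + ⋯ + ℓ_i))`, where
`(D_j g)(U) = Dg(U)·F^j(U)` is computed one rung down via the inclusions. -/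
noncomputable def lieIter (F : ∀ ℓ k : ℕ, Y k → Y (k - ℓ)) :
    (L : List ℕ) → (k : ℕ) → Y k → Y (k - L.sum)
  | [], k => fun u => ecast Y (by simp) u
  | [ℓ], k => fun u => ecast Y (by simp) (F ℓ k u)
  | ℓ₁ :: ℓ₂ :: L, k => fun u =>
      ecast Y (by simp only [List.sum_cons]; omega)
        (fderiv ℝ (lieIter F (ℓ₂ :: L) (k - ℓ₁))
          (incl (k - ℓ₁) k (Nat.sub_le k ℓ₁) u) (F ℓ₁ k u))

/-- A family `H^ℓ`, `1 ≤ ℓ ≤ T`, represented on the scale by maps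
`H ℓ k : Y k → Y (k − ℓ)`, is of class `𝒞` if for all `ℓ ≤ k ≤ T` and `j + k ≤ N` the
representative at rung `k` is `j` times continuously differentiable on `U k` as a map
into `Y (k − ℓ)`, with bounded derivatives. -/
def IsClassC (N T : ℕ) (U : ∀ k, Set (Y k)) (H : ∀ ℓ k : ℕ, Y k → Y (k - ℓ)) : Prop :=
  ∀ ℓ j k : ℕ, 1 ≤ ℓ → ℓ ≤ k → k ≤ T → j + k ≤ N →
    ContDiffOn ℝ j (H ℓ k) (U k) ∧
    ∀ i : ℕ, i ≤ j → ∃ C : ℝ, ∀ u ∈ U k,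
      ‖iteratedFDerivWithin ℝ i (H ℓ k) (U k) u‖ ≤ C

theorem _root_.Composition.lt_of_mem_blocks {n : ℕ} (c : Composition n) (hc : 2 ≤ c.length)
    {m : ℕ} (hm : m ∈ c.blocks) : m < n := by
  have hlen : (c.blocks.erase m).length = c.length - 1 := by
    rw [List.length_erase_of_mem hm, c.blocks_length]
  obtain ⟨x, hx⟩ : ∃ x, x ∈ c.blocks.erase m :=
    List.exists_mem_of_length_pos (by omega)
  have hsum : m + (c.blocks.erase m).sum = n := by
    rw [← List.sum_cons, ← (List.perm_cons_erase hm).sum_eq, c.blocks_sum]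
  have hx_le : x ≤ (c.blocks.erase m).sum := List.le_sum_of_mem hx
  have hx_pos : 1 ≤ x := c.one_le_blocks (List.mem_of_mem_erase hx)
  omega

section BoundedContDiffOn

variable {E F G : Type*} [NormedAddCommGroup E] [NormedSpace ℝ E] [NormedAddCommGroup F]
  [NormedSpace ℝ F] [NormedAddCommGroup G] [NormedSpace ℝ G]

def BoundedContDiffOn (n : ℕ) (f : E → F) (s : Set E) : Prop :=
  ContDiffOn ℝ n f s ∧ ∀ i ≤ n, ∃ C, ∀ x ∈ s, ‖iteratedFDerivWithin ℝ i f s x‖ ≤ C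

variable {n : ℕ} {f g : E → F} {s : Set E}

theorem BoundedContDiffOn.congr (hf : BoundedContDiffOn n f s) (h : Set.EqOn g f s) :
    BoundedContDiffOn n g s := by
  refine ⟨hf.1.congr h, fun i hi => ?_⟩
  obtain ⟨C, hC⟩ := hf.2 i hi
  exact ⟨C, fun x hx => by rw [iteratedFDerivWithin_congr h hx]; exact hC x hx⟩

theorem boundedContDiffOn_zero : BoundedContDiffOn n (fun _ : E => (0 : F)) s :=
  ⟨contDiffOn_const, fun i _ => ⟨0, fun x _ => by simp⟩⟩

theorem BoundedContDiffOn.add (hs : UniqueDiffOn ℝ s) (hf : BoundedContDiffOn n f s)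
    (hg : BoundedContDiffOn n g s) : BoundedContDiffOn n (fun x => f x + g x) s := by
  refine ⟨hf.1.add hg.1, fun i hi => ?_⟩
  obtain ⟨Cf, hCf⟩ := hf.2 i hi
  obtain ⟨Cg, hCg⟩ := hg.2 i hi
  have hi' : (i : WithTop ℕ∞) ≤ n := by exact_mod_cast hi
  refine ⟨Cf + Cg, fun x hx => ?_⟩
  rw [fun_iteratedFDerivWithin_add_apply (hf.1.of_le hi' x hx) (hg.1.of_le hi' x hx) hs hx]
  exact (norm_add_le _ _).trans (add_le_add (hCf x hx) (hCg x hx))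

theorem BoundedContDiffOn.sub (hs : UniqueDiffOn ℝ s) (hf : BoundedContDiffOn n f s)
    (hg : BoundedContDiffOn n g s) : BoundedContDiffOn n (fun x => f x - g x) s := by
  refine ⟨hf.1.sub hg.1, fun i hi => ?_⟩
  obtain ⟨Cf, hCf⟩ := hf.2 i hi
  obtain ⟨Cg, hCg⟩ := hg.2 i hi
  have hi' : (i : WithTop ℕ∞) ≤ n := by exact_mod_cast hi
  refine ⟨Cf + Cg, fun x hx => ?_⟩
  rw [fun_iteratedFDerivWithin_sub_apply (hf.1.of_le hi' x hx) (hg.1.of_le hi' x hx) hs hx]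
  exact (norm_sub_le _ _).trans (add_le_add (hCf x hx) (hCg x hx))

theorem BoundedContDiffOn.sum {ι : Type*} (hs : UniqueDiffOn ℝ s) {f : ι → E → F}
    {t : Finset ι} (hf : ∀ c ∈ t, BoundedContDiffOn n (f c) s) :
    BoundedContDiffOn n (fun x => ∑ c ∈ t, f c x) s := by
  induction t using Finset.cons_induction with
  | empty => simpa only [Finset.sum_empty] using boundedContDiffOn_zero
  | cons c t hc ih =>
    simp only [Finset.sum_cons]
    rw [Finset.forall_mem_cons] at hf
    exact hf.1.add hs (ih hf.2)

theorem BoundedContDiffOn.clm_comp (L : F →L[ℝ] G) (hs : UniqueDiffOn ℝ s)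
    (hf : BoundedContDiffOn n f s) : BoundedContDiffOn n (fun x => L (f x)) s := by
  refine ⟨L.contDiff.comp_contDiffOn hf.1, fun i hi => ?_⟩
  obtain ⟨C, hC⟩ := hf.2 i hi
  have hi' : (i : WithTop ℕ∞) ≤ n := by exact_mod_cast hi
  refine ⟨‖L‖ * C, fun x hx => ?_⟩
  exact (L.norm_iteratedFDerivWithin_comp_left (hf.1 x hx) hs hx hi').trans
    (mul_le_mul_of_nonneg_left (hC x hx) (norm_nonneg L))

theorem BoundedContDiffOn.const_smul (a : ℝ) (hs : UniqueDiffOn ℝ s)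
    (hf : BoundedContDiffOn n f s) : BoundedContDiffOn n (fun x => a • f x) s :=
  hf.clm_comp (a • ContinuousLinearMap.id ℝ F) hs

theorem BoundedContDiffOn.comp_clm {t : Set F} (L : E →L[ℝ] F) (hs : IsOpen s) (ht : IsOpen t)
    (hst : Set.MapsTo L s t) {f : F → G} (hf : BoundedContDiffOn n f t) :
    BoundedContDiffOn n (fun x => f (L x)) s := by
  refine ⟨hf.1.comp L.contDiff.contDiffOn hst, fun i hi => ?_⟩
  obtain ⟨C, hC⟩ := hf.2 i hi
  have hi' : (i : WithTop ℕ∞) ≤ n := by exact_mod_cast hi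
  have hpre : IsOpen (L ⁻¹' t) := ht.preimage L.continuous
  refine ⟨C * ‖L‖ ^ i, fun x hx => ?_⟩
  have hx' : x ∈ L ⁻¹' t := hst hx
  have hcomp := L.iteratedFDerivWithin_comp_right hf.1 ht.uniqueDiffOn hpre.uniqueDiffOn hx' hi'
  rw [iteratedFDerivWithin_of_isOpen i hpre hx'] at hcomp
  rw [iteratedFDerivWithin_of_isOpen i hs hx, show (fun x => f (L x)) = f ∘ L from rfl, hcomp]
  calc _ ≤ ‖iteratedFDerivWithin ℝ i f t (L x)‖ * ∏ _ : Fin i, ‖L‖ :=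
        ContinuousMultilinearMap.norm_compContinuousLinearMap_le _ _
    _ ≤ C * ‖L‖ ^ i := by
        rw [Finset.prod_const, Finset.card_univ, Fintype.card_fin]
        exact mul_le_mul_of_nonneg_right (hC _ hx') (by positivity)

theorem BoundedContDiffOn.fderiv_of_isOpen (hs : IsOpen s) (hf : BoundedContDiffOn (n + 1) f s) :
    BoundedContDiffOn n (fderiv ℝ f) s := by
  refine ⟨hf.1.fderiv_of_isOpen hs (by exact_mod_cast le_rfl), fun i hi => ?_⟩
  obtain ⟨C, hC⟩ := hf.2 (i + 1) (by omega)
  have heq : Set.EqOn (fderiv ℝ f) (fderivWithin ℝ f s) s :=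
    fun x hx => (fderivWithin_of_isOpen hs hx).symm
  refine ⟨C, fun x hx => ?_⟩
  rw [iteratedFDerivWithin_congr heq hx, norm_iteratedFDerivWithin_fderivWithin hs.uniqueDiffOn hx]
  exact hC x hx

theorem BoundedContDiffOn.clm_apply (hs : UniqueDiffOn ℝ s) {f : E → F →L[ℝ] G} {g : E → F}
    (hf : BoundedContDiffOn n f s) (hg : BoundedContDiffOn n g s) :
    BoundedContDiffOn n (fun x => f x (g x)) s := by
  refine ⟨hf.1.clm_apply hg.1, fun i hi => ?_⟩
  choose Cf hCf using fun p : Fin (i + 1) => hf.2 p (by omega)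
  choose Cg hCg using fun p : Fin (i + 1) => hg.2 (i - p) (by omega)
  have hi' : (i : WithTop ℕ∞) ≤ n := by exact_mod_cast hi
  refine ⟨∑ p : Fin (i + 1), (i.choose p : ℝ) * Cf p * Cg p, fun x hx => ?_⟩
  refine (norm_iteratedFDerivWithin_clm_apply hf.1 hg.1 hs hx hi').trans ?_
  rw [← Fin.sum_univ_eq_sum_range (fun p => (i.choose p : ℝ) * ‖iteratedFDerivWithin ℝ p f s x‖ *
    ‖iteratedFDerivWithin ℝ (i - p) g s x‖)]
  refine Finset.sum_le_sum fun p _ => ?_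
  have hCf_nonneg : 0 ≤ Cf p := (norm_nonneg _).trans (hCf p x hx)
  gcongr
  exacts [hCf p x hx, hCg p x hx]

end BoundedContDiffOn

def IsClassCMap (N T : ℕ) (U : ∀ k, Set (Y k)) (ℓ : ℕ) (Φ : ∀ k, Y k → Y (k - ℓ)) : Prop :=
  ∀ j k : ℕ, ℓ ≤ k → k ≤ T → j + k ≤ N → BoundedContDiffOn j (Φ k) (U k)

section ClassC

variable {Y incl} {N T : ℕ} {U : ∀ k, Set (Y k)}

theorem isClassC_iff {H : ∀ ℓ k : ℕ, Y k → Y (k - ℓ)} :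
    IsClassC Y N T U H ↔ ∀ ℓ, 1 ≤ ℓ → IsClassCMap Y N T U ℓ (H ℓ) :=
  ⟨fun h ℓ hℓ j k => h ℓ j k hℓ, fun h ℓ j k hℓ => h ℓ hℓ j k⟩

theorem isClassCMap_lieIter (hUopen : ∀ k, IsOpen (U k))
    (hUnested : ∀ j k (h : j ≤ k), ∀ u ∈ U k, incl j k h u ∈ U j)
    {F : ∀ ℓ k : ℕ, Y k → Y (k - ℓ)} :
    ∀ L : List ℕ, L ≠ [] → (∀ m ∈ L, 1 ≤ m ∧ IsClassCMap Y N T U m (F m)) →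
      IsClassCMap Y N T U L.sum (lieIter Y incl F L)
  | [], hL, _ => absurd rfl hL
  | [ℓ], _, hF => fun j k hk hkT hjN => by
      rw [List.sum_singleton] at hk
      rw [lieIter]
      exact ((hF ℓ List.mem_cons_self).2 j k hk hkT hjN).clm_comp (ecast Y _)
        (hUopen k).uniqueDiffOn
  | ℓ₁ :: ℓ₂ :: L, _, hF => fun j k hk hkT hjN => by
      obtain ⟨hℓ₁, hFℓ₁⟩ := hF ℓ₁ List.mem_cons_self
      have ih := isClassCMap_lieIter hUopen hUnested (ℓ₂ :: L) (List.cons_ne_nil _ _)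
        fun m hm => hF m (List.mem_cons_of_mem _ hm)
      simp only [List.sum_cons] at hk ih
      have hdiff := (ih (j + 1) (k - ℓ₁) (by omega) (by omega) (by omega)).fderiv_of_isOpen
        (hUopen _)
      have hs : UniqueDiffOn ℝ (U k) := (hUopen k).uniqueDiffOn
      rw [lieIter]
      exact ((hdiff.comp_clm (incl (k - ℓ₁) k (Nat.sub_le k ℓ₁)) (hUopen k) (hUopen _)
        (hUnested _ _ _)).clm_apply hs (hFℓ₁ j k (by omega) hkT hjN)).clm_comp (ecast Y _) hs

theorem isClassCMap_of_recursion (hUopen : ∀ k, IsOpen (U k))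
    (hUnested : ∀ j k (h : j ≤ k), ∀ u ∈ U k, incl j k h u ∈ U j)
    {G F : ∀ ℓ k : ℕ, Y k → Y (k - ℓ)} {ℓ : ℕ} (hℓ : 2 ≤ ℓ)
    (hG : IsClassCMap Y N T U ℓ (G ℓ)) (hF : ∀ m < ℓ, 1 ≤ m → IsClassCMap Y N T U m (F m))
    (hrec : ∀ k, ℓ ≤ k → k ≤ T → ∀ u ∈ U k,
      F ℓ k u = G ℓ k u - ∑ c : Composition ℓ,
        if 2 ≤ c.length then
          ((c.length.factorial : ℝ))⁻¹ •
            ecast Y (by rw [c.blocks_sum]) (lieIter Y incl F c.blocks k u)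
        else 0) :
    IsClassCMap Y N T U ℓ (F ℓ) := by
  intro j k hk hkT hjN
  have hs : UniqueDiffOn ℝ (U k) := (hUopen k).uniqueDiffOn
  refine ((hG j k hk hkT hjN).sub hs (BoundedContDiffOn.sum hs fun c _ => ?_)).congr
    (hrec k hk hkT)
  by_cases hc : 2 ≤ c.length
  · simp only [if_pos hc]
    have hblocks : ∀ m ∈ c.blocks, 1 ≤ m ∧ IsClassCMap Y N T U m (F m) := fun m hm =>
      ⟨c.one_le_blocks hm, hF m (c.lt_of_mem_blocks hc hm) (c.one_le_blocks hm)⟩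
    have hL := isClassCMap_lieIter hUopen hUnested c.blocks
      (c.blocks_eq_nil.not.mpr (by omega)) hblocks
    exact ((hL j k (c.blocks_sum.le.trans hk) hkT hjN).clm_comp (ecast Y _) hs).const_smul _ hs
  · simp only [if_neg hc]
    exact boundedContDiffOn_zero

end ClassC

/-- On a scale of Banach spaces `Y₀ ⊇ Y₁ ⊇ ⋯ ⊇ Y_{K+1}` (inclusions `incl`, injective
and norm-nonincreasing) with nested open sets `U_k ⊆ Y_k`, if the family
`(G^ℓ)_{ℓ=1}^{K+1}` is of class `𝒞` and `(F^ℓ)` is obtained from it by the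
modified-vector-field recursion `F¹ = G¹`,
`F^ℓ = G^ℓ − Σ_{i=2}^{ℓ} (1/i!) Σ_{ℓ₁+⋯+ℓ_i=ℓ} D_{ℓ₁}⋯D_{ℓ_{i−1}}F^{ℓ_i}`,
then `(F^ℓ)_{ℓ=1}^{K+1}` is also of class `𝒞`. -/
theorem stmt12 (K N : ℕ)
    (U : ∀ k, Set (Y k)) (hUopen : ∀ k, IsOpen (U k))
    (hUnested : ∀ j k (h : j ≤ k), ∀ u ∈ U k, incl j k h u ∈ U j)
    (G F : ∀ ℓ k : ℕ, Y k → Y (k - ℓ))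
    (hGclass : IsClassC Y N (K + 1) U G)
    (hF1 : ∀ k, k ≤ K + 1 → ∀ u ∈ U k, F 1 k u = G 1 k u)
    (hFrec : ∀ ℓ k : ℕ, 2 ≤ ℓ → ℓ ≤ k → k ≤ K + 1 → ∀ u ∈ U k,
      F ℓ k u = G ℓ k u - ∑ c : Composition ℓ,
        if 2 ≤ c.length then
          ((c.length.factorial : ℝ))⁻¹ •
            ecast Y (by rw [c.blocks_sum]) (lieIter Y incl F c.blocks k u)
        else 0) :
    IsClassC Y N (K + 1) U F := by
  rw [isClassC_iff] at hGclass ⊢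
  intro ℓ
  induction ℓ using Nat.strong_induction_on with
  | _ ℓ ih =>
    intro hℓ
    rcases hℓ.eq_or_lt with rfl | hℓ2
    · exact fun j k hk hkT hjN => (hGclass 1 le_rfl j k hk hkT hjN).congr (hF1 k hkT)
    · exact isClassCMap_of_recursion hUopen hUnested hℓ2 (hGclass ℓ hℓ) ih (hFrec ℓ · hℓ2)

end Stmt12
end

section
/- Let Y be a real Hilbert space, e₀ ∈ Y a unit vector, and R > 0. For u ∈ Y write u₀ = ⟨u, e₀⟩ and u⊥ = u − u₀·e₀. Define the cones C₋ = {u ∈ Y : u₀ ≤ 0 and ‖u⊥‖ ≤ −u₀} and C₊ = {u ∈ Y : u₀ ≥ 0 and ‖u⊥‖ ≤ u₀}, and set D = {u ∈ Y : ‖u‖ < R} \ C₋. Then D is star-shaped with respect to every u ∈ C₊ with 0 < ‖u‖ < R; that is, for every such u and every w ∈ D, the whole segment {t·u + (1−t)·w : t ∈ [0,1]} is contained in D. -/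
open scoped RealInnerProductSpace

/-!
Both `C₋` and `C₊ = -C₋` are salient convex cones (the transversal part `u - ⟪u, e⟫ • e`
is linear and the norm is subadditive). If `t • u + (1 - t) • w ∈ C₋` with `t < 1`, adding
`t • (-u) ∈ C₋` gives `(1 - t) • w ∈ C₋`, hence `w ∈ C₋`; if `t = 1` the point is `u`, which
lies in `C₋ ∩ -C₋ = {0}`. The ball is convex, so `D = B_R(0) \ C₋` is star-shaped about `u`.
-/

section LowerCone

variable {E : Type*} [NormedAddCommGroup E] [InnerProductSpace ℝ E]

/-- The cone `C₋` of the statement, around the axis `e`. -/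
def lowerCone (e : E) : ConvexCone ℝ E where
  carrier := {u | ⟪u, e⟫ ≤ 0 ∧ ‖u - ⟪u, e⟫ • e‖ ≤ -⟪u, e⟫}
  smul_mem' c hc u := by
    rintro ⟨hu₀, hu⟩
    refine ⟨by rw [real_inner_smul_left]; exact mul_nonpos_of_nonneg_of_nonpos hc.le hu₀, ?_⟩
    calc ‖c • u - ⟪c • u, e⟫ • e‖ = c * ‖u - ⟪u, e⟫ • e‖ := by
          rw [real_inner_smul_left, mul_smul, ← smul_sub, norm_smul, Real.norm_of_nonneg hc.le]
      _ ≤ c * -⟪u, e⟫ := by gcongr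
      _ = -⟪c • u, e⟫ := by rw [real_inner_smul_left]; ring
  add_mem' u := by
    rintro ⟨hu₀, hu⟩ v ⟨hv₀, hv⟩
    refine ⟨by rw [inner_add_left]; linarith, ?_⟩
    calc ‖u + v - ⟪u + v, e⟫ • e‖ = ‖(u - ⟪u, e⟫ • e) + (v - ⟪v, e⟫ • e)‖ := by
          rw [inner_add_left, add_smul]; abel_nf
      _ ≤ ‖u - ⟪u, e⟫ • e‖ + ‖v - ⟪v, e⟫ • e‖ := norm_add_le _ _
      _ ≤ -⟪u + v, e⟫ := by rw [inner_add_left]; linarith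

lemma neg_mem_lowerCone {e u : E} (hu : ‖u - ⟪u, e⟫ • e‖ ≤ ⟪u, e⟫) : -u ∈ lowerCone e := by
  have hu₀ : 0 ≤ ⟪u, e⟫ := (norm_nonneg _).trans hu
  refine ⟨by rw [inner_neg_left]; linarith, ?_⟩
  rwa [inner_neg_left, neg_neg, neg_smul, sub_neg_eq_add, ← norm_neg, neg_add', neg_neg]

lemma lowerCone_salient (e : E) : (lowerCone e).Salient := by
  rintro u ⟨hu₀, hu⟩ hu0 ⟨hnu₀, -⟩
  rw [inner_neg_left] at hnu₀
  have hu₀0 : ⟪u, e⟫ = 0 := le_antisymm hu₀ (by linarith)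
  rw [hu₀0, zero_smul, sub_zero, neg_zero] at hu
  exact hu0 (norm_le_zero_iff.mp hu)

end LowerCone

lemma ConvexCone.starConvex_compl {E : Type*} [AddCommGroup E] [Module ℝ E]
    {K : ConvexCone ℝ E} (hK : K.Salient) {u : E} (hu : -u ∈ K) (hu0 : u ≠ 0) :
    StarConvex ℝ u (K : Set E)ᶜ := by
  intro w hw a b ha hb hab hv
  obtain rfl | hb := hb.eq_or_lt
  · rw [add_zero] at hab
    rw [hab, one_smul, zero_smul, add_zero] at hv
    exact hK _ hu (neg_ne_zero.mpr hu0) (by rwa [neg_neg])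
  obtain rfl | ha := ha.eq_or_lt
  · rw [zero_add] at hab
    rw [hab, zero_smul, zero_add, one_smul] at hv
    exact hw hv
  have hbw : b • w = (a • u + b • w) + a • -u := by rw [smul_neg]; abel
  exact hw ((K.smul_mem_iff hb).mp (hbw ▸ K.add_mem hv (K.smul_mem ha hu)))

theorem stmt14_general {Y : Type*} [NormedAddCommGroup Y] [InnerProductSpace ℝ Y]
    (e₀ : Y) (R : ℝ)
    (u : Y) (huC : ‖u - ⟪u, e₀⟫ • e₀‖ ≤ ⟪u, e₀⟫)
    (hu0 : 0 < ‖u‖) (huR : ‖u‖ < R)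
    (w : Y) (hwR : ‖w‖ < R)
    (hw : ¬(⟪w, e₀⟫ ≤ 0 ∧ ‖w - ⟪w, e₀⟫ • e₀‖ ≤ -⟪w, e₀⟫)) :
    ∀ t ∈ Set.Icc (0 : ℝ) 1,
      ‖t • u + (1 - t) • w‖ < R ∧
      ¬(⟪t • u + (1 - t) • w, e₀⟫ ≤ 0 ∧
        ‖(t • u + (1 - t) • w) - ⟪t • u + (1 - t) • w, e₀⟫ • e₀‖ ≤
          -⟪t • u + (1 - t) • w, e₀⟫) := by
  rintro t ⟨ht0, ht1⟩
  have hD : StarConvex ℝ u (Metric.ball 0 R ∩ (lowerCone e₀ : Set Y)ᶜ) :=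
    ((convex_ball 0 R).starConvex (mem_ball_zero_iff.mpr huR)).inter
      (ConvexCone.starConvex_compl (lowerCone_salient e₀) (neg_mem_lowerCone huC)
        (norm_pos_iff.mp hu0))
  have hw' : w ∈ Metric.ball 0 R ∩ (lowerCone e₀ : Set Y)ᶜ := ⟨mem_ball_zero_iff.mpr hwR, hw⟩
  obtain ⟨hball, hcone⟩ := hD hw' ht0 (sub_nonneg.mpr ht1) (add_sub_cancel t 1)
  exact ⟨mem_ball_zero_iff.mp hball, hcone⟩

/-- Star-shapedness of the punctured ball domain for the nonlocal NLS: with `e₀` a unit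
vector, `u₀ = ⟨u, e₀⟩`, `u⊥ = u − u₀e₀`, cones `C₋ = {u₀ ≤ 0, ‖u⊥‖ ≤ −u₀}` and
`C₊ = {u₀ ≥ 0, ‖u⊥‖ ≤ u₀}`, the set `D = B_R(0) \ C₋` is star-shaped with respect to
every `u ∈ C₊` with `0 < ‖u‖ < R`. -/
theorem stmt14 {Y : Type*} [NormedAddCommGroup Y] [InnerProductSpace ℝ Y]
    (e₀ : Y) (he₀ : ‖e₀‖ = 1) (R : ℝ) (hR : 0 < R)
    (u : Y) (hu₀ : 0 ≤ ⟪u, e₀⟫) (huC : ‖u - ⟪u, e₀⟫ • e₀‖ ≤ ⟪u, e₀⟫)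
    (hu0 : 0 < ‖u‖) (huR : ‖u‖ < R)
    (w : Y) (hwR : ‖w‖ < R)
    (hw : ¬(⟪w, e₀⟫ ≤ 0 ∧ ‖w - ⟪w, e₀⟫ • e₀‖ ≤ -⟪w, e₀⟫)) :
    ∀ t ∈ Set.Icc (0 : ℝ) 1,
      ‖t • u + (1 - t) • w‖ < R ∧
      ¬(⟪t • u + (1 - t) • w, e₀⟫ ≤ 0 ∧
        ‖(t • u + (1 - t) • w) - ⟪t • u + (1 - t) • w, e₀⟫ • e₀‖ ≤
          -⟪t • u + (1 - t) • w, e₀⟫) :=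
  stmt14_general e₀ R u huC hu0 huR w hwR hw
end
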